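/- arXiv:1806.01870 — 2 statements merged into one kernel-verified Lean document; each statement's English description precedes it below -/
import Mathlib

section
/- With $\phi$, $\psi$, $a$ as defined, let $\Theta=(S,U,W,\Lambda)$ have independent components with $U,W\sim U(0,1)$, $S>0$ arbitrary with a law on $(0,\infty)$, and $\Lambda = 1+B(V^{1/\rho}-1)$ for independent $B\sim\mathrm{Ber}(1-\rho)$, $V\sim U(0,1)$. Then for every $x>0$, $\phi(x,\Theta)\overset{d}{=}\psi(x,\Theta)$. -/
open MeasureTheory ProbabilityTheory Real Set

/-- The update map `φ`. -/
noncomputable def phiUpdate (α : ℝ) (x : ℝ) (θ : ℝ × ℝ × ℝ × ℝ) : ℝ :=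
  θ.2.2.2 ^ (1/α) * (θ.2.1 ^ (1/α) * x + (1 - θ.2.1) ^ (1/α) * θ.1)

/-- The threshold `a(θ) = (λ^{-1/α}-1)((1-u)/u)^{1/α} s`. -/
noncomputable def aThreshold (α : ℝ) (θ : ℝ × ℝ × ℝ × ℝ) : ℝ :=
  (θ.2.2.2 ^ (-(1/α)) - 1) * ((1 - θ.2.1) / θ.2.1) ^ (1/α) * θ.1

/-- The multigamma coupler `ψ`. -/
noncomputable def psiUpdate (α ρ : ℝ) (x : ℝ) (θ : ℝ × ℝ × ℝ × ℝ) : ℝ :=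
  if x ≤ aThreshold α θ then θ.2.2.1 ^ (1/(α*ρ)) * (1 - θ.2.1) ^ (1/α) * θ.1
  else phiUpdate α x θ

/-!
When `B = 0`, `Λ = 1` and `x ≤ a(Θ)` fails, so `ψ = φ`. When `B = 1`, `Λ = V^{1/ρ}` and
`x ≤ a(Θ)` holds iff `V ≤ c := r^{αρ}` with `r = (1-U)^{1/α}S / (U^{1/α}x + (1-U)^{1/α}S)`;
there `ψ(x,Θ) = W^{1/(αρ)} r (U^{1/α}x + (1-U)^{1/α}S)`, which is `φ` with `V` replaced by `cW`.
Hence `ψ(x,Θ) = φ(x,Θ')`, where `Θ'` uses `V' = if V ≤ c then cW else V` in place of `V`.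
Conditionally on `(S,U,B)`, `V'` is again uniform on `(0,1)`: on `{V ≤ c}`, of probability `c`,
`cW` is uniform on `(0,c)`. So `(S,U,B,V')` has the law of `(S,U,B,V)`.
-/

/-- `x ≤ a(θ)` iff `λ^{1/α} ≤ critRatio α x s u`; the paper's `v(u,s)` is `critRatio ^ (αρ)`. -/
noncomputable def critRatio (α x s u : ℝ) : ℝ :=
  (1 - u) ^ (1/α) * s / (u ^ (1/α) * x + (1 - u) ^ (1/α) * s)

section critRatio

variable {α x s u : ℝ}

lemma critRatio_pos (hx : 0 < x) (hs : 0 < s) (hu : u ∈ Ioo (0:ℝ) 1) :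
    0 < critRatio α x s u := by
  have := hu.1; have : 0 < 1 - u := sub_pos.2 hu.2
  unfold critRatio; positivity

lemma critRatio_lt_one (hx : 0 < x) (hs : 0 < s) (hu : u ∈ Ioo (0:ℝ) 1) :
    critRatio α x s u < 1 := by
  have := hu.1; have : 0 < 1 - u := sub_pos.2 hu.2
  unfold critRatio
  rw [div_lt_one (by positivity)]
  have : 0 < u ^ (1/α) * x := by positivity
  linarith

lemma critRatio_rpow_mem_Ioc {p : ℝ} (hx : 0 < x) (hs : 0 < s) (hu : u ∈ Ioo (0:ℝ) 1)
    (hp : 0 ≤ p) : critRatio α x s u ^ p ∈ Ioc (0:ℝ) 1 :=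
  ⟨rpow_pos_of_pos (critRatio_pos hx hs hu) p,
    rpow_le_one (critRatio_pos hx hs hu).le (critRatio_lt_one hx hs hu).le hp⟩

lemma le_aThreshold_iff {w l : ℝ} (hx : 0 < x) (hs : 0 < s) (hu : u ∈ Ioo (0:ℝ) 1) (hl : 0 < l) :
    x ≤ aThreshold α (s, u, w, l) ↔ l ^ (1/α) ≤ critRatio α x s u := by
  have hP : 0 < u ^ (1/α) := rpow_pos_of_pos hu.1 _
  have hN : 0 < (1 - u) ^ (1/α) * s := mul_pos (rpow_pos_of_pos (sub_pos.2 hu.2) _) hs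
  have hm : 0 < l ^ (1/α) := rpow_pos_of_pos hl _
  have ha : aThreshold α (s, u, w, l)
      = ((l ^ (1/α))⁻¹ - 1) * ((1 - u) ^ (1/α) * s) / u ^ (1/α) := by
    rw [aThreshold, rpow_neg hl.le, div_rpow (sub_pos.2 hu.2).le hu.1.le]
    ring
  rw [ha, le_div_iff₀ hP, critRatio, le_div_iff₀ (by positivity)]
  generalize l ^ (1/α) = m at hm ⊢
  rw [← mul_le_mul_iff_of_pos_left hm, show m * ((m⁻¹ - 1) * ((1 - u) ^ (1/α) * s))
    = (1 - u) ^ (1/α) * s - m * ((1 - u) ^ (1/α) * s) by field_simp]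
  constructor <;> intro h <;> linarith

end critRatio

noncomputable def resampleBelow (c : ℝ) (p : ℝ × ℝ) : ℝ :=
  if p.2 ≤ c then p.1 * c else p.2

section pointwise

variable {α ρ x s u w : ℝ}

lemma psiUpdate_lambda_one (hx : 0 < x) (hs : 0 < s) (hu : u ∈ Ioo (0:ℝ) 1) :
    psiUpdate α ρ x (s, u, w, 1) = phiUpdate α x (s, u, w, 1) := by
  rw [psiUpdate, if_neg]
  rw [le_aThreshold_iff hx hs hu one_pos, one_rpow, not_le]
  exact critRatio_lt_one hx hs hu

lemma psiUpdate_lambda_rpow {v : ℝ} (hα : 0 < α) (hρ : 0 < ρ) (hx : 0 < x) (hs : 0 < s)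
    (hu : u ∈ Ioo (0:ℝ) 1) (hw : 0 ≤ w) (hv : 0 < v) :
    psiUpdate α ρ x (s, u, w, v ^ (1/ρ))
      = phiUpdate α x (s, u, w, resampleBelow (critRatio α x s u ^ (α * ρ)) (w, v) ^ (1/ρ)) := by
  set r := critRatio α x s u with hr_def
  have hr : 0 < r := critRatio_pos hx hs hu
  have hαρ : 0 < α * ρ := mul_pos hα hρ
  have rpow_rpow_eq {t : ℝ} (ht : 0 ≤ t) : (t ^ (1/ρ)) ^ (1/α) = t ^ (α * ρ)⁻¹ := by
    rw [← rpow_mul ht]; congr 1; field_simp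
  have hthreshold : x ≤ aThreshold α (s, u, w, v ^ (1/ρ)) ↔ v ≤ r ^ (α * ρ) := by
    rw [le_aThreshold_iff hx hs hu (rpow_pos_of_pos hv _), rpow_rpow_eq hv.le,
      rpow_inv_le_iff_of_pos hv.le hr.le hαρ]
  rw [psiUpdate, resampleBelow]
  simp only [hthreshold]
  split_ifs with hv_le
  · have hrD : r * (u ^ (1/α) * x + (1 - u) ^ (1/α) * s) = (1 - u) ^ (1/α) * s := by
      have := hu.1; have : 0 < 1 - u := sub_pos.2 hu.2
      rw [hr_def, critRatio, div_mul_cancel₀]; positivity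
    rw [phiUpdate]
    dsimp only
    rw [rpow_rpow_eq (by positivity), mul_rpow hw (by positivity),
      rpow_rpow_inv hr.le hαρ.ne', mul_assoc (w ^ (α * ρ)⁻¹), hrD, one_div, mul_assoc]
  · rfl

lemma psiUpdate_eq_phiUpdate_resampleBelow {v b : ℝ} (hα : 0 < α) (hρ : 0 < ρ)
    (hx : 0 < x) (hs : 0 < s) (hu : u ∈ Ioo (0:ℝ) 1) (hw : 0 ≤ w) (hv : 0 < v)
    (hb : b = 0 ∨ b = 1) :
    psiUpdate α ρ x (s, u, w, 1 + b * (v ^ (1/ρ) - 1))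
      = phiUpdate α x
          (s, u, w, 1 + b * (resampleBelow (critRatio α x s u ^ (α * ρ)) (w, v) ^ (1/ρ) - 1)) := by
  rcases hb with rfl | rfl
  · simp only [zero_mul, add_zero]
    exact psiUpdate_lambda_one hx hs hu
  · simp only [one_mul, add_sub_cancel]
    exact psiUpdate_lambda_rpow hα hρ hx hs hu hw hv

end pointwise

local notation "𝕌" => (volume.restrict (Ioo (0:ℝ) 1) : Measure ℝ)

instance : IsProbabilityMeasure 𝕌 := ⟨by simp⟩

lemma map_mul_const_restrict_Ioo_zero_one {c : ℝ} (hc : 0 < c) :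
    Measure.map (· * c) 𝕌 = (ENNReal.ofReal c)⁻¹ • volume.restrict (Ioo 0 c) := by
  have hpre : (· * c) ⁻¹' Ioo 0 c = Ioo (0:ℝ) 1 := by
    rw [preimage_mul_const_Ioo₀ _ _ hc, zero_div, div_self hc.ne']
  rw [← hpre, ← Measure.restrict_map (measurable_mul_const c) measurableSet_Ioo,
    Real.map_volume_mul_right hc.ne', Measure.restrict_smul, abs_of_pos (inv_pos.2 hc),
    ENNReal.ofReal_inv_of_pos hc]

lemma Iic_inter_Ioo_zero_one_ae_eq {c : ℝ} (hc0 : 0 < c) (hc1 : c ≤ 1) :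
    (Iic c ∩ Ioo 0 1 : Set ℝ) =ᵐ[volume] Ioo 0 c := by
  rcases hc1.lt_or_eq with hc1 | rfl
  · have : Iic c ∩ Ioo 0 1 = Ioc 0 c := by
      ext t; simp only [mem_inter_iff, mem_Iic, mem_Ioo, mem_Ioc]
      constructor
      · rintro ⟨h1, h2, -⟩; exact ⟨h2, h1⟩
      · rintro ⟨h1, h2⟩; exact ⟨h2, h1, h2.trans_lt hc1⟩
    rw [this]; exact Ioo_ae_eq_Ioc.symm
  · rw [inter_eq_right.2 fun t ht => ht.2.le]
    rfl

theorem measurePreserving_resampleBelow {c : ℝ} (hc0 : 0 < c) (hc1 : c ≤ 1) :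
    MeasurePreserving (resampleBelow c) (Measure.prod 𝕌 𝕌) 𝕌 := by
  set μ := Measure.prod 𝕌 𝕌
  have hm : Measurable (resampleBelow c) :=
    Measurable.ite (measurableSet_le measurable_snd measurable_const)
      (measurable_fst.mul_const c) measurable_snd
  have hlow : Measure.restrict 𝕌 (Iic c) = volume.restrict (Ioo 0 c) := by
    rw [Measure.restrict_restrict measurableSet_Iic]
    exact Measure.restrict_congr_set (Iic_inter_Ioo_zero_one_ae_eq hc0 hc1)
  have hprod (t : Set ℝ) : μ.restrict (Prod.snd ⁻¹' t) = Measure.prod 𝕌 (Measure.restrict 𝕌 t) := by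
    rw [← univ_prod, ← Measure.prod_restrict, Measure.restrict_univ]
  have hS : MeasurableSet (Prod.snd ⁻¹' Iic c : Set (ℝ × ℝ)) := measurable_snd measurableSet_Iic
  refine ⟨hm, ?_⟩
  calc μ.map (resampleBelow c)
      = (μ.restrict (Prod.snd ⁻¹' Iic c)).map (resampleBelow c)
        + (μ.restrict (Prod.snd ⁻¹' Iic c)ᶜ).map (resampleBelow c) := by
        rw [← Measure.map_add _ _ hm, Measure.restrict_add_restrict_compl hS]
    _ = Measure.restrict 𝕌 (Iic c) + Measure.restrict 𝕌 (Iic c)ᶜ := by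
      congr 1
      · have : resampleBelow c =ᵐ[μ.restrict (Prod.snd ⁻¹' Iic c)] (· * c) ∘ Prod.fst := by
          filter_upwards [ae_restrict_mem hS] with p hp using if_pos hp
        rw [Measure.map_congr this, hprod, ← Measure.map_map (measurable_mul_const c)
            measurable_fst, Measure.map_fst_prod, Measure.map_smul,
          map_mul_const_restrict_Ioo_zero_one hc0, hlow, smul_smul, Measure.restrict_apply_univ,
          Real.volume_Ioo, sub_zero,
          ENNReal.mul_inv_cancel (by simpa using hc0) ENNReal.ofReal_ne_top, one_smul]
      · have : resampleBelow c =ᵐ[μ.restrict (Prod.snd ⁻¹' Iic c)ᶜ] Prod.snd := by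
          filter_upwards [ae_restrict_mem hS.compl] with p hp using if_neg hp
        rw [Measure.map_congr this, ← preimage_compl, hprod, Measure.map_snd_prod, measure_univ,
          one_smul]
    _ = 𝕌 := Measure.restrict_add_restrict_compl measurableSet_Iic

lemma measurable_uncurry_resampleBelow {β : Type*} [MeasurableSpace β] {c : β → ℝ}
    (hc : Measurable c) : Measurable (Function.uncurry fun b => resampleBelow (c b)) :=
  Measurable.ite (measurableSet_le measurable_snd.snd (hc.comp measurable_fst))
    (measurable_snd.fst.mul (hc.comp measurable_fst)) measurable_snd.snd

theorem ProbabilityTheory.IndepFun.map_prodMk_skew_eq {Ω β γ δ : Type*} [MeasurableSpace Ω]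
    [MeasurableSpace β] [MeasurableSpace γ] [MeasurableSpace δ] {μ : Measure Ω} [IsFiniteMeasure μ]
    {X : Ω → β} {Y : Ω → γ} {Z : Ω → δ} (hX : Measurable X) (hY : Measurable Y)
    (hZ : Measurable Z) (hXY : IndepFun X Y μ) (hXZ : IndepFun X Z μ) {g : β → γ → δ}
    (hg : Measurable (Function.uncurry g)) (hgYZ : ∀ᵐ b ∂μ.map X, (μ.map Y).map (g b) = μ.map Z) :
    μ.map (fun ω => (X ω, g (X ω) (Y ω))) = μ.map (fun ω => (X ω, Z ω)) := by
  rw [hXZ.map_prod_eq_prod_map_map hX.aemeasurable hZ.aemeasurable,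
    ← ((MeasurePreserving.id _).skew_product hg hgYZ).map_eq,
    ← hXY.map_prod_eq_prod_map_map hX.aemeasurable hY.aemeasurable,
    Measure.map_map ?_ (hX.prodMk hY)]
  · rfl
  · exact measurable_fst.prodMk hg

theorem map_prodMk_resampleBelow_eq {Ω β : Type*} [MeasurableSpace Ω] [MeasurableSpace β]
    {μ : Measure Ω} [IsFiniteMeasure μ] {X : Ω → β} {W V : Ω → ℝ} (hX : Measurable X)
    (hW : Measurable W) (hV : Measurable V) (hXWV : IndepFun X (fun ω => (W ω, V ω)) μ)
    (hWV : IndepFun W V μ) (hWlaw : μ.map W = 𝕌) (hVlaw : μ.map V = 𝕌) {c : β → ℝ}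
    (hc : Measurable c) (hc01 : ∀ᵐ ω ∂μ, c (X ω) ∈ Ioc (0:ℝ) 1) :
    μ.map (fun ω => (X ω, resampleBelow (c (X ω)) (W ω, V ω))) = μ.map (fun ω => (X ω, V ω)) := by
  refine hXWV.map_prodMk_skew_eq hX (hW.prodMk hV) hV (hXWV.comp measurable_id measurable_snd)
    (measurable_uncurry_resampleBelow hc) ?_
  filter_upwards [(ae_map_iff hX.aemeasurable (hc measurableSet_Ioc)).2 hc01] with b hb
  rw [hWV.map_prod_eq_prod_map_map hW.aemeasurable hV.aemeasurable, hWlaw, hVlaw]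
  exact (measurePreserving_resampleBelow hb.1 hb.2).map_eq

lemma ProbabilityTheory.iIndepFun.indepFun_prodMk₃_prodMk {ι Ω β : Type*} [DecidableEq ι]
    [MeasurableSpace Ω] [MeasurableSpace β] {μ : Measure Ω} {f : ι → Ω → β}
    (h : iIndepFun f μ) (hf : ∀ i, Measurable (f i)) {i j k l m : ι}
    (hdisj : Disjoint ({i, j, k} : Finset ι) {l, m}) :
    IndepFun (fun ω => (f i ω, f j ω, f k ω)) (fun ω => (f l ω, f m ω)) μ :=
  (h.indepFun_finset _ _ hdisj hf).comp
    (φ := fun p : ({i, j, k} : Finset ι) → β => (p ⟨i, by simp⟩, p ⟨j, by simp⟩, p ⟨k, by simp⟩))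
    (ψ := fun p : ({l, m} : Finset ι) → β => (p ⟨l, by simp⟩, p ⟨m, by simp⟩))
    (by fun_prop) (by fun_prop)

theorem phi_eq_psi_in_law_general
    {Ω : Type*} [MeasureSpace Ω]
    (α ρ : ℝ) (hα : 0 < α) (hρ : ρ ∈ Set.Ioo (0:ℝ) 1)
    (S U W B V : Ω → ℝ) (hSm : Measurable S) (hUm : Measurable U) (hWm : Measurable W)
    (hBm : Measurable B) (hVm : Measurable V)
    (hindep : iIndepFun ![S, U, W, B, V] ℙ)
    (hU : Measure.map U ℙ = volume.restrict (Set.Ioo (0:ℝ) 1))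
    (hW : Measure.map W ℙ = volume.restrict (Set.Ioo (0:ℝ) 1))
    (hV : Measure.map V ℙ = volume.restrict (Set.Ioo (0:ℝ) 1))
    (hB01 : ∀ ω, B ω = 0 ∨ B ω = 1)
    (hSpos : ∀ᵐ ω ∂ℙ, 0 < S ω) :
    ∀ x : ℝ, 0 < x →
      Measure.map (fun ω =>
          phiUpdate α x (S ω, U ω, W ω, 1 + B ω * (V ω ^ (1/ρ) - 1))) ℙ
        = Measure.map (fun ω =>
            psiUpdate α ρ x (S ω, U ω, W ω, 1 + B ω * (V ω ^ (1/ρ) - 1))) ℙ := by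
  intro x hx
  have := hindep.isProbabilityMeasure
  have mem_Ioo {Y : Ω → ℝ} (hYm : Measurable Y) (hY : Measure.map Y ℙ = 𝕌) :
      ∀ᵐ ω, Y ω ∈ Ioo (0:ℝ) 1 :=
    ae_of_ae_map hYm.aemeasurable (hY ▸ ae_restrict_mem measurableSet_Ioo)
  have hmeas : ∀ i, Measurable (![S, U, W, B, V] i) := fun i => by fin_cases i <;> assumption
  let X : Ω → ℝ × ℝ × ℝ := fun ω => (S ω, U ω, B ω)
  have hX : Measurable X := hSm.prodMk (hUm.prodMk hBm)
  let c : ℝ × ℝ × ℝ → ℝ := fun a => critRatio α x a.1 a.2.1 ^ (α * ρ)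
  have hc : Measurable c := by unfold c critRatio; fun_prop
  have hlaw := map_prodMk_resampleBelow_eq hX hWm hVm
    (hindep.indepFun_prodMk₃_prodMk hmeas (i := 0) (j := 1) (k := 3) (l := 2) (m := 4) (by decide))
    (hindep.indepFun (show (2 : Fin 5) ≠ 4 by decide)) hW hV hc (by
      filter_upwards [hSpos, mem_Ioo hUm hU] with ω hs hu
      exact critRatio_rpow_mem_Ioc hx hs hu (mul_pos hα hρ.1).le)
  let F : (ℝ × ℝ × ℝ) × ℝ → ℝ := fun p =>
    phiUpdate α x (p.1.1, p.1.2.1, 0, 1 + p.1.2.2 * (p.2 ^ (1/ρ) - 1))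
  have hF : Measurable F := by unfold F phiUpdate; fun_prop
  have hψ : (fun ω => psiUpdate α ρ x (S ω, U ω, W ω, 1 + B ω * (V ω ^ (1/ρ) - 1)))
      =ᵐ[ℙ] F ∘ fun ω => (X ω, resampleBelow (c (X ω)) (W ω, V ω)) := by
    filter_upwards [hSpos, mem_Ioo hUm hU, mem_Ioo hWm hW, mem_Ioo hVm hV] with ω hs hu hw hv
    exact psiUpdate_eq_phiUpdate_resampleBelow hα hρ.1 hx hs hu hw.1.le hv.1 (hB01 ω)
  calc _ = (Measure.map (fun ω => (X ω, V ω)) ℙ).map F := (Measure.map_map hF (hX.prodMk hVm)).symm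
    _ = (Measure.map (fun ω => (X ω, resampleBelow (c (X ω)) (W ω, V ω))) ℙ).map F := by rw [hlaw]
    _ = _ := by
      rw [Measure.map_map hF, Measure.map_congr hψ]
      exact hX.prodMk ((measurable_uncurry_resampleBelow hc).comp (hX.prodMk (hWm.prodMk hVm)))

/-- With `Θ = (S,U,W,Λ)` having independent components, `U,W,V` uniform on `(0,1)`,
`S > 0`, `B ∼ Ber(1-ρ)` and `Λ = 1 + B(V^{1/ρ}-1)`, for every `x > 0` the random
variables `φ(x,Θ)` and `ψ(x,Θ)` have the same distribution. -/
theorem phi_eq_psi_in_law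
    {Ω : Type*} [MeasureSpace Ω] [IsProbabilityMeasure (ℙ : Measure Ω)]
    (α ρ : ℝ) (hα : 0 < α) (hρ : ρ ∈ Set.Ioo (0:ℝ) 1)
    (S U W B V : Ω → ℝ) (hSm : Measurable S) (hUm : Measurable U) (hWm : Measurable W)
    (hBm : Measurable B) (hVm : Measurable V)
    (hindep : iIndepFun ![S, U, W, B, V] ℙ)
    (hU : Measure.map U ℙ = volume.restrict (Set.Ioo (0:ℝ) 1))
    (hW : Measure.map W ℙ = volume.restrict (Set.Ioo (0:ℝ) 1))
    (hV : Measure.map V ℙ = volume.restrict (Set.Ioo (0:ℝ) 1))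
    (hB01 : ∀ ω, B ω = 0 ∨ B ω = 1) (hB : ℙ {ω | B ω = 1} = ENNReal.ofReal (1 - ρ))
    (hSpos : ∀ᵐ ω ∂ℙ, 0 < S ω) :
    ∀ x : ℝ, 0 < x →
      Measure.map (fun ω =>
          phiUpdate α x (S ω, U ω, W ω, 1 + B ω * (V ω ^ (1/ρ) - 1))) ℙ
        = Measure.map (fun ω =>
            psiUpdate α ρ x (S ω, U ω, W ω, 1 + B ω * (V ω ^ (1/ρ) - 1))) ℙ :=
  phi_eq_psi_in_law_general α ρ hα hρ S U W B V hSm hUm hWm hBm hVm hindep hU hW hV hB01 hSpos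
end

section
/- Let $\{J_n\}_{n\geq 1}$ be independent Bernoulli random variables with $p_n = \mathbb{P}(J_n = 0)$ satisfying $\sum_{n\geq 1}(1-p_n)<\infty$, and suppose $q_n\in(0,1]$ satisfy $q_n \leq \prod_{k=n}^{\infty} p_k$ for all $n\geq n^*$. Let $\{U^{(n)}\}_{n\geq n^*}$ be constructed by the recursion $(J_n, U^{(n+1)}) = F(U^{(n)}, p_n)$ from $U^{(n^*)}\sim U(0,1)$ (where $F$ is the uniform splitting map), and define $\varsigma = \inf\{n\geq n^*: U^{(n)}\leq q_n\}$ and $\tau=\sup\{n\geq 0: J_n = 1\}^+$. Then: (a) if $\lim_{n\to\infty}q_n = 1$ then $\varsigma<\infty$ a.s.; (b) if $\sum_{n\geq n^*}(1-q_n)<\infty$ then $\mathbb{E}\varsigma<\infty$; (c) if $\sum_{n\geq n^*}(1-q_n)e^{tn}<\infty$ for some $t>0$ then $\mathbb{E} e^{t\varsigma}<\infty$. -/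
/-
The uniform splitting map `x ↦ F(x, c)` preserves the uniform law on `(0, 1)`, so every `U⁽ⁿ⁾`
with `n ≥ n*` is uniform, and since `ς > n` forces `U⁽ⁿ⁾ > qₙ` we get `ℙ(ς > n) ≤ 1 - qₙ`.
Claim (a) follows by letting `n → ∞`; (b) and (c) follow from the tail-sum formulas
`𝔼 ς = ∑ ℙ(ς > n)` and `𝔼 e^{tς} ≤ 1 + ∑ e^{t(n+1)} ℙ(ς > n)`.
-/

open MeasureTheory ProbabilityTheory Real Set Filter
open scoped ENNReal

/-- Second component of the paper's uniform splitting map `F(x, c)`. -/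
noncomputable def splitMap (c x : ℝ) : ℝ :=
  if x ≤ c then x / c else (x - c) / (1 - c)

lemma measurable_splitMap (c : ℝ) : Measurable (splitMap c) :=
  Measurable.ite (measurableSet_le measurable_id measurable_const)
    (measurable_id.div_const c) ((measurable_id.sub_const c).div_const (1 - c))

lemma volume_preimage_sub_div (a : ℝ) {k : ℝ} (hk : 0 < k) (s : Set ℝ) :
    volume ((fun x => (x - a) / k) ⁻¹' s) = ENNReal.ofReal k * volume s := by
  have : (fun x => (x - a) / k) ⁻¹' s = (· + -a) ⁻¹' ((· * k⁻¹) ⁻¹' s) := by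
    ext; simp [div_eq_mul_inv, sub_eq_add_neg]
  rw [this, measure_preimage_add_right, Real.volume_preimage_mul_right (inv_ne_zero hk.ne'),
    inv_inv, abs_of_pos hk]

lemma map_splitMap_volume_restrict_Ioo {c : ℝ} (hc : c ∈ Ioo (0 : ℝ) 1) :
    (volume.restrict (Ioo (0 : ℝ) 1)).map (splitMap c) = volume.restrict (Ioo (0 : ℝ) 1) := by
  obtain ⟨hc0, hc1⟩ := hc
  ext s hs
  have hleft : splitMap c ⁻¹' s ∩ Ioc 0 c = (fun x => (x - 0) / c) ⁻¹' (s ∩ Ioc 0 1) := by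
    ext x
    simp only [mem_inter_iff, mem_preimage, mem_Ioc, sub_zero, div_pos_iff_of_pos_right hc0,
      div_le_one hc0]
    exact and_congr_left fun hx => by rw [splitMap, if_pos hx.2]
  have hright : splitMap c ⁻¹' s ∩ Ioo c 1 =
      (fun x => (x - c) / (1 - c)) ⁻¹' (s ∩ Ioo 0 1) := by
    ext x
    simp only [mem_inter_iff, mem_preimage, mem_Ioo, div_pos_iff_of_pos_right (sub_pos.2 hc1),
      div_lt_one (sub_pos.2 hc1), sub_pos, sub_lt_sub_iff_right]
    exact and_congr_left fun hx => by rw [splitMap, if_neg hx.1.not_ge]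
  have hIoc : volume (s ∩ Ioc 0 1) = volume (s ∩ Ioo (0 : ℝ) 1) :=
    measure_congr (ae_eq_refl s |>.inter Ioo_ae_eq_Ioc.symm)
  have hdisj : Disjoint (splitMap c ⁻¹' s ∩ Ioc 0 c) (splitMap c ⁻¹' s ∩ Ioo c 1) :=
    disjoint_left.2 fun x hx hx' => hx.2.2.not_gt hx'.2.1
  rw [Measure.map_apply (measurable_splitMap c) hs,
    Measure.restrict_apply (measurable_splitMap c hs), Measure.restrict_apply hs]
  calc volume (splitMap c ⁻¹' s ∩ Ioo 0 1)
      = volume (splitMap c ⁻¹' s ∩ Ioc 0 c) + volume (splitMap c ⁻¹' s ∩ Ioo c 1) := by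
        rw [← measure_union hdisj ((measurable_splitMap c hs).inter measurableSet_Ioo),
          ← inter_union_distrib_left, Ioc_union_Ioo_eq_Ioo hc0.le hc1]
    _ = (ENNReal.ofReal c + ENNReal.ofReal (1 - c)) * volume (s ∩ Ioo 0 1) := by
        rw [hleft, hright, volume_preimage_sub_div 0 hc0, volume_preimage_sub_div c (sub_pos.2 hc1),
          hIoc, add_mul]
    _ = volume (s ∩ Ioo 0 1) := by
        rw [← ENNReal.ofReal_add hc0.le (sub_pos.2 hc1).le, add_sub_cancel, ENNReal.ofReal_one,
          one_mul]

lemma apply_le_apply_zero_add_sum_range {M : Type*} [AddCommMonoid M] [PartialOrder M]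
    [IsOrderedAddMonoid M] [CanonicallyOrderedAdd M] (g : ℕ → M) (m : ℕ) :
    g m ≤ g 0 + ∑ n ∈ Finset.range m, g (n + 1) := by
  rw [add_comm, ← Finset.sum_range_succ']
  exact Finset.single_le_sum (fun _ _ => zero_le) (Finset.self_mem_range_succ m)

lemma ENNReal.tsum_ne_top_of_le_ofReal {a : ℕ → ℝ≥0∞} {b : ℕ → ℝ} {N : ℕ} (ha : ∀ n, a n ≠ ⊤)
    (hab : ∀ n, N ≤ n → a n ≤ ENNReal.ofReal (b n)) (hb : Summable fun n => b (N + n)) :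
    ∑' n, a n ≠ ⊤ := by
  rw [← ENNReal.summable.sum_add_tsum_nat_add' (k := N)]
  refine ENNReal.add_ne_top.2 ⟨ENNReal.sum_ne_top.2 fun n _ => ha n, ?_⟩
  refine ne_top_of_le_ne_top (ENNReal.tsum_coe_ne_top_iff_summable.2 hb.toNNReal) ?_
  exact ENNReal.tsum_le_tsum fun n => (hab (n + N) le_add_self).trans_eq (by rw [add_comm]; rfl)

section Probability

variable {Ω : Type*} [MeasurableSpace Ω] {μ : Measure Ω}

lemma map_eq_volume_restrict_Ioo_of_splitMap {U : ℕ → Ω → ℝ} {p : ℕ → ℝ} {n₀ : ℕ}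
    (hp : ∀ n, n₀ ≤ n → p n ∈ Ioo (0 : ℝ) 1) (hUm : ∀ n, Measurable (U n))
    (h₀ : μ.map (U n₀) = volume.restrict (Ioo (0 : ℝ) 1))
    (hrec : ∀ n, n₀ ≤ n → ∀ ω, U (n + 1) ω = splitMap (p n) (U n ω)) {n : ℕ} (hn : n₀ ≤ n) :
    μ.map (U n) = volume.restrict (Ioo (0 : ℝ) 1) := by
  induction n, hn using Nat.le_induction with
  | base => exact h₀
  | succ n hn ih =>
    rw [show U (n + 1) = splitMap (p n) ∘ U n from funext (hrec n hn),
      ← Measure.map_map (measurable_splitMap _) (hUm n), ih,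
      map_splitMap_volume_restrict_Ioo (hp n hn)]

lemma measure_lt_le_of_map_eq_volume_restrict_Ioo {X : Ω → ℝ} (hX : Measurable X)
    (h : μ.map X = volume.restrict (Ioo (0 : ℝ) 1)) (a : ℝ) :
    μ {ω | a < X ω} ≤ ENNReal.ofReal (1 - a) :=
  calc μ {ω | a < X ω} = μ.map X (Ioi a) := (Measure.map_apply hX measurableSet_Ioi).symm
    _ = volume (Ioi a ∩ Ioo 0 1) := by rw [h, Measure.restrict_apply measurableSet_Ioi]
    _ ≤ volume (Ioo a 1) := measure_mono fun x hx => ⟨hx.1, hx.2.2⟩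
    _ = ENNReal.ofReal (1 - a) := Real.volume_Ioo

lemma measurable_sInf_setOf {P : ℕ → Ω → Prop} (hP : ∀ n, MeasurableSet {ω | P n ω}) :
    Measurable fun ω => sInf {n | P n ω} := by
  classical
  -- `sInf ∅ = 0` is also `Nat.find` of the predicate that holds everywhere.
  have hex : ∀ ω, ∃ n, P n ω ∨ ∀ m, ¬ P m ω := fun ω =>
    (em (∃ n, P n ω)).elim (fun ⟨n, hn⟩ => ⟨n, .inl hn⟩) fun h => ⟨0, .inr (not_exists.1 h)⟩
  have hfind : (fun ω => sInf {n | P n ω}) = fun ω => Nat.find (hex ω) := by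
    funext ω
    have hset : sInf {n | P n ω} = sInf {n | P n ω ∨ ∀ m, ¬ P m ω} := by
      by_cases hω : ∃ n, P n ω
      · simp [not_forall_not.2 hω]
      · simp_all
    rw [hset]
    exact le_antisymm (Nat.sInf_le (Nat.find_spec (hex ω)))
      (Nat.find_min' _ (Nat.sInf_mem (hex ω)))
  rw [hfind]
  refine measurable_find hex fun n => (hP n).union (?_ : MeasurableSet {ω | ∀ m, ¬ P m ω})
  rw [ofPred_forall]
  exact .iInter fun m => (hP m).compl

lemma measure_lt_sInf_le (P : ℕ → Ω → Prop) (n : ℕ) :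
    μ {ω | n < sInf {m | P m ω}} ≤ μ {ω | ¬ P n ω} :=
  measure_mono fun _ => Nat.notMem_of_lt_sInf

lemma ae_exists_of_measure_not_le {P : ℕ → Ω → Prop} {ε : ℕ → ℝ≥0∞} {N : ℕ}
    (hε : Tendsto ε atTop (nhds 0)) (hP : ∀ n, N ≤ n → μ {ω | ¬ P n ω} ≤ ε n) :
    ∀ᵐ ω ∂μ, ∃ n, P n ω := by
  rw [ae_iff]
  refine nonpos_iff_eq_zero.1 (ge_of_tendsto hε (eventually_atTop.2 ⟨N, fun n hn => ?_⟩))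
  exact (measure_mono fun ω (hω : ¬ ∃ n, P n ω) hPn => hω ⟨n, hPn⟩).trans (hP n hn)

lemma lintegral_sum_range_eq_tsum {X : Ω → ℕ} (hX : Measurable X) (f : ℕ → ℝ≥0∞) :
    ∫⁻ ω, ∑ n ∈ Finset.range (X ω), f n ∂μ = ∑' n, f n * μ {ω | n < X ω} := by
  have hmeas : ∀ n, MeasurableSet {ω | n < X ω} := fun n => measurableSet_lt measurable_const hX
  have hsum : ∀ ω, ∑ n ∈ Finset.range (X ω), f n =
      ∑' n, {ω | n < X ω}.indicator (fun _ => f n) ω := fun ω => by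
    rw [tsum_eq_sum fun n hn =>
      indicator_of_notMem (s := {ω | n < X ω}) (mt Finset.mem_range.2 hn) _]
    exact Finset.sum_congr rfl fun n hn =>
      (indicator_of_mem (s := {ω | n < X ω}) (Finset.mem_range.1 hn) fun _ => f n).symm
  simp_rw [hsum]
  rw [lintegral_tsum fun n => (measurable_const.indicator (hmeas n)).aemeasurable]
  simp_rw [lintegral_indicator_const (hmeas _)]

variable [IsFiniteMeasure μ] {X : Ω → ℕ} {b : ℕ → ℝ} {N : ℕ}

lemma lintegral_natCast_lt_top_of_measure_lt_le (hX : Measurable X)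
    (htail : ∀ n, N ≤ n → μ {ω | n < X ω} ≤ ENNReal.ofReal (b n))
    (hb : Summable fun n => b (N + n)) :
    ∫⁻ ω, (X ω : ℝ≥0∞) ∂μ < ⊤ := by
  have hmean : ∫⁻ ω, (X ω : ℝ≥0∞) ∂μ = ∑' n, μ {ω | n < X ω} := by
    simpa using lintegral_sum_range_eq_tsum hX (μ := μ) (fun _ => 1)
  rw [hmean, lt_top_iff_ne_top]
  exact ENNReal.tsum_ne_top_of_le_ofReal (fun n => measure_ne_top _ _) htail hb

lemma lintegral_exp_mul_lt_top_of_measure_lt_le (hX : Measurable X) (t : ℝ)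
    (htail : ∀ n, N ≤ n → μ {ω | n < X ω} ≤ ENNReal.ofReal (b n))
    (hb : Summable fun n : ℕ => b (N + n) * exp (t * (N + n))) :
    ∫⁻ ω, ENNReal.ofReal (exp (t * X ω)) ∂μ < ⊤ := by
  have hbound : ∀ ω, ENNReal.ofReal (exp (t * X ω)) ≤
      1 + ∑ n ∈ Finset.range (X ω), ENNReal.ofReal (exp (t * (n + 1))) := fun ω => by
    simpa using apply_le_apply_zero_add_sum_range (fun n : ℕ => ENNReal.ofReal (exp (t * n))) (X ω)
  have hb' : Summable fun n : ℕ => exp (t * ((N + n : ℕ) + 1)) * b (N + n) :=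
    (hb.mul_left (exp t)).congr fun n => by
      push_cast
      rw [show t * (N + n + 1) = t * (N + n) + t by ring, exp_add]
      ring
  calc ∫⁻ ω, ENNReal.ofReal (exp (t * X ω)) ∂μ
      ≤ ∫⁻ ω, 1 + ∑ n ∈ Finset.range (X ω), ENNReal.ofReal (exp (t * (n + 1))) ∂μ :=
        lintegral_mono hbound
    _ = μ univ + ∑' n : ℕ, ENNReal.ofReal (exp (t * (n + 1))) * μ {ω | n < X ω} := by
        rw [lintegral_add_left measurable_const, lintegral_sum_range_eq_tsum hX, lintegral_one]
    _ < ⊤ := by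
        refine ENNReal.add_lt_top.2 ⟨measure_lt_top μ univ, lt_top_iff_ne_top.2 ?_⟩
        refine ENNReal.tsum_ne_top_of_le_ofReal (b := fun n => exp (t * (n + 1)) * b n)
          (fun n => ENNReal.mul_ne_top ENNReal.ofReal_ne_top (measure_ne_top _ _))
          (fun n hn => ?_) hb'
        exact (mul_le_mul_right (htail n hn) _).trans_eq (ENNReal.ofReal_mul (exp_pos _).le).symm

end Probability

theorem running_time_finiteness_general
    {Ω : Type*} [MeasureSpace Ω] [IsProbabilityMeasure (ℙ : Measure Ω)]
    (p q : ℕ → ℝ) (nstar : ℕ)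
    (hp : ∀ n, p n ∈ Set.Ioo (0:ℝ) 1)
    (U : ℕ → Ω → ℝ) (hUm : ∀ n, Measurable (U n))
    (hUstar : Measure.map (U nstar) ℙ = volume.restrict (Set.Ioo (0:ℝ) 1))
    (hrec : ∀ n, nstar ≤ n → ∀ ω,
      U (n + 1) ω = if U n ω ≤ p n then U n ω / p n else (U n ω - p n) / (1 - p n))
    (ς : Ω → ℕ) (hς : ∀ ω, ς ω = sInf {n : ℕ | nstar ≤ n ∧ U n ω ≤ q n}) :
    (Tendsto q atTop (nhds 1) →
      ∀ᵐ ω ∂ℙ, {n : ℕ | nstar ≤ n ∧ U n ω ≤ q n}.Nonempty) ∧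
    ((Summable fun n : ℕ => 1 - q (nstar + n)) →
      ∫⁻ ω, (ς ω : ℝ≥0∞) ∂ℙ < ⊤) ∧
    (∀ t : ℝ, 0 < t → (Summable fun n : ℕ => (1 - q (nstar + n)) * Real.exp (t * (nstar + n))) →
      ∫⁻ ω, ENNReal.ofReal (Real.exp (t * ς ω)) ∂ℙ < ⊤) := by
  have hmiss : ∀ n, nstar ≤ n →
      ℙ {ω | ¬ (nstar ≤ n ∧ U n ω ≤ q n)} ≤ ENNReal.ofReal (1 - q n) := by
    intro n hn
    have hU := map_eq_volume_restrict_Ioo_of_splitMap (fun n _ => hp n) hUm hUstar hrec hn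
    refine (measure_mono fun ω (hω : ¬ (nstar ≤ n ∧ U n ω ≤ q n)) => ?_).trans
      (measure_lt_le_of_map_eq_volume_restrict_Ioo (hUm n) hU (q n))
    exact not_le.1 fun h => hω ⟨hn, h⟩
  have hςm : Measurable ς := by
    rw [funext hς]
    exact measurable_sInf_setOf fun n =>
      (MeasurableSet.const _).inter (measurableSet_le (hUm n) measurable_const)
  have htail : ∀ n, nstar ≤ n → ℙ {ω | n < ς ω} ≤ ENNReal.ofReal (1 - q n) := fun n hn => by
    simpa only [hς] using (measure_lt_sInf_le _ n).trans (hmiss n hn)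
  refine ⟨fun hq1 => ?_, fun hsum => lintegral_natCast_lt_top_of_measure_lt_le hςm htail hsum,
    fun t _ hsum => lintegral_exp_mul_lt_top_of_measure_lt_le hςm t htail hsum⟩
  exact ae_exists_of_measure_not_le (by simpa using ENNReal.tendsto_ofReal (hq1.const_sub 1)) hmiss

/-- Running time of the backward-detection algorithm. With `U^{(n*)}` uniform on `(0,1)`
and the recursion `U^{(n+1)} = F(U^{(n)}, p_n)` (uniform splitting), probabilities
`p_n ∈ (0,1)` with `∑ (1-p_n) < ∞`, and computable bounds `q_n ≤ ∏_{k≥n} p_k`, the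
running time `ς = inf{n ≥ n* : U^{(n)} ≤ q_n}` satisfies:
(a) if `q_n → 1` then `ς < ∞` a.s.;
(b) if `∑_{n≥n*}(1-q_n) < ∞` then `𝔼 ς < ∞`;
(c) if `∑_{n≥n*}(1-q_n)e^{tn} < ∞` for some `t > 0` then `𝔼 e^{tς} < ∞`. -/
theorem running_time_finiteness
    {Ω : Type*} [MeasureSpace Ω] [IsProbabilityMeasure (ℙ : Measure Ω)]
    (p q : ℕ → ℝ) (nstar : ℕ)
    (hp : ∀ n, p n ∈ Set.Ioo (0:ℝ) 1) (hpsum : Summable (fun n => 1 - p n))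
    (hq : ∀ n, nstar ≤ n → q n ∈ Set.Ioc (0:ℝ) 1)
    (hqle : ∀ n, nstar ≤ n → q n ≤ ∏' k : ℕ, p (n + k))
    (U : ℕ → Ω → ℝ) (hUm : ∀ n, Measurable (U n))
    (hUstar : Measure.map (U nstar) ℙ = volume.restrict (Set.Ioo (0:ℝ) 1))
    (hrec : ∀ n, nstar ≤ n → ∀ ω,
      U (n + 1) ω = if U n ω ≤ p n then U n ω / p n else (U n ω - p n) / (1 - p n))
    (ς : Ω → ℕ) (hς : ∀ ω, ς ω = sInf {n : ℕ | nstar ≤ n ∧ U n ω ≤ q n}) :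
    (Tendsto q atTop (nhds 1) →
      ∀ᵐ ω ∂ℙ, {n : ℕ | nstar ≤ n ∧ U n ω ≤ q n}.Nonempty) ∧
    ((Summable fun n : ℕ => 1 - q (nstar + n)) →
      ∫⁻ ω, (ς ω : ℝ≥0∞) ∂ℙ < ⊤) ∧
    (∀ t : ℝ, 0 < t → (Summable fun n : ℕ => (1 - q (nstar + n)) * Real.exp (t * (nstar + n))) →
      ∫⁻ ω, ENNReal.ofReal (Real.exp (t * ς ω)) ∂ℙ < ⊤) :=
  running_time_finiteness_general p q nstar hp U hUm hUstar hrec ς hς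
end
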